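/- For system (1.1), if the input u ∈ L^∞([0,r];U) strongly distinguishes the state (x₀,y₀) ∈ O in time r > 0, so that the matrix Q(r,x₀,y₀;u) = ∫₀^r q(t) q'(t) dt is positive definite, then the initial state is recovered by the explicit formula x₀ = Q⁻¹(r,x₀,y₀;u) ∫₀^r q(t,x₀,y₀;u) p(t,x₀,y₀;u) dt. -/

import Mathlib

open MeasureTheory Matrix Set intervalIntegral Filter

noncomputable section

/-- `g` is locally Lipschitz on the set `s`. -/
def LocLipOn {α β : Type*} [PseudoMetricSpace α] [PseudoMetricSpace β]
    (s : Set α) (g : α → β) : Prop :=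
  ∀ z ∈ s, ∃ K : NNReal, ∃ t ∈ nhdsWithin z s, LipschitzOnWith K g t

/-- `u ∈ L^∞([0,r]; U)` : measurable, with values in `U` and (essentially) bounded on `[0,r]`. -/
def AdmOn (m : ℕ) (r : ℝ) (U : Set (Fin m → ℝ)) (u : ℝ → (Fin m → ℝ)) : Prop :=
  Measurable u ∧ (∀ t ∈ Icc (0:ℝ) r, u t ∈ U) ∧ ∃ M : ℝ, ∀ t ∈ Icc (0:ℝ) r, ‖u t‖ ≤ M

/-- `u ∈ L^∞_loc(ℝ₊; U)` : measurable, with values in `U` and bounded on compact subintervals of `ℝ₊`. -/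
def AdmLoc (m : ℕ) (U : Set (Fin m → ℝ)) (u : ℝ → (Fin m → ℝ)) : Prop :=
  Measurable u ∧ (∀ t, 0 ≤ t → u t ∈ U) ∧ ∀ T : ℝ, ∃ M : ℝ, ∀ t ∈ Icc (0:ℝ) T, ‖u t‖ ≤ M

/-- `u ∈ L^∞(ℝ₊; U)` : measurable, with values in `U` and bounded on `ℝ₊`. -/
def AdmBdd (m : ℕ) (U : Set (Fin m → ℝ)) (u : ℝ → (Fin m → ℝ)) : Prop :=
  Measurable u ∧ (∀ t, 0 ≤ t → u t ∈ U) ∧ ∃ M : ℝ, ∀ t, 0 ≤ t → ‖u t‖ ≤ M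

/-- locally bounded on `ℝ₊`. -/
def LocBddF {E : Type*} [Norm E] (g : ℝ → E) : Prop :=
  ∀ T : ℝ, ∃ M : ℝ, ∀ t ∈ Icc (0:ℝ) T, ‖g t‖ ≤ M

/-- the sup norm `sup_{t ≥ 0} ‖g(t)‖`. -/
def supNorm {E : Type*} [Norm E] (g : ℝ → E) : ℝ :=
  ⨆ t : (Ici (0:ℝ)), ‖g (t : ℝ)‖

/-- `(x, y)` is a (Carathéodory) solution of system (1.1) on `ℝ₊`, for the input `u` :
`ẋ = A(y,u)x + b(y,u)`, `ẏ = f(y,u) + C'(y)x`, `(x(t), y(t)) ∈ O`. -/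
def IsSystemSol (n k m : ℕ) (O : Set ((Fin n → ℝ) × (Fin k → ℝ)))
    (A : (Fin k → ℝ) → (Fin m → ℝ) → Matrix (Fin n) (Fin n) ℝ)
    (b : (Fin k → ℝ) → (Fin m → ℝ) → (Fin n → ℝ))
    (Cm : (Fin k → ℝ) → Matrix (Fin k) (Fin n) ℝ)
    (f : (Fin k → ℝ) → (Fin m → ℝ) → (Fin k → ℝ))
    (u : ℝ → (Fin m → ℝ)) (x : ℝ → (Fin n → ℝ)) (y : ℝ → (Fin k → ℝ)) : Prop :=
  ContinuousOn x (Ici (0:ℝ)) ∧ ContinuousOn y (Ici (0:ℝ)) ∧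
  (∀ t, 0 ≤ t → (x t, y t) ∈ O) ∧
  (∀ t, 0 ≤ t → x t = x 0 + ∫ s in (0:ℝ)..t, (A (y s) (u s) *ᵥ x s + b (y s) (u s))) ∧
  (∀ t, 0 ≤ t → y t = y 0 + ∫ s in (0:ℝ)..t, (f (y s) (u s) + Cm (y s) *ᵥ x s))

/-- `Φ` is the transition matrix of the linear time-varying system `ż = A(y(t), u(t)) z`,
i.e. `Φ̇ = A(y(t),u(t)) Φ`, `Φ(0) = I` (entrywise Carathéodory form), and `Φ(t)` is invertible. -/
def IsTransition (n k m : ℕ)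
    (A : (Fin k → ℝ) → (Fin m → ℝ) → Matrix (Fin n) (Fin n) ℝ)
    (y : ℝ → (Fin k → ℝ)) (u : ℝ → (Fin m → ℝ))
    (Φ : ℝ → Matrix (Fin n) (Fin n) ℝ) : Prop :=
  Φ 0 = 1 ∧ (∀ i j, Continuous fun t => Φ t i j) ∧ (∀ t : ℝ, IsUnit (Φ t).det) ∧
  ∀ (t : ℝ) (i j : Fin n),
    Φ t i j = (1 : Matrix (Fin n) (Fin n) ℝ) i j + ∫ s in (0:ℝ)..t, (A (y s) (u s) * Φ s) i j

/-- `q(t) = ∫₀ᵗ Φ'(s) C(s) ds ∈ ℝ^{n×k}` where `C(s) = (C'(y(s)))'`. -/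
def qmat (n k : ℕ) (Cm : (Fin k → ℝ) → Matrix (Fin k) (Fin n) ℝ)
    (y : ℝ → (Fin k → ℝ)) (Φ : ℝ → Matrix (Fin n) (Fin n) ℝ) (t : ℝ) :
    Matrix (Fin n) (Fin k) ℝ :=
  Matrix.of fun i j => ∫ s in (0:ℝ)..t, ((Φ s)ᵀ * (Cm (y s))ᵀ) i j

/-- `θ(t) = ∫₀ᵗ Φ(t) Φ⁻¹(τ) b(y(τ), u(τ)) dτ`. -/
def thetaVec (n k m : ℕ)
    (b : (Fin k → ℝ) → (Fin m → ℝ) → (Fin n → ℝ))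
    (y : ℝ → (Fin k → ℝ)) (u : ℝ → (Fin m → ℝ))
    (Φ : ℝ → Matrix (Fin n) (Fin n) ℝ) (t : ℝ) : Fin n → ℝ :=
  Φ t *ᵥ ∫ τ in (0:ℝ)..t, (Φ τ)⁻¹ *ᵥ b (y τ) (u τ)

/-- `p(t) = y(t) − y(0) − ∫₀ᵗ f(y(s),u(s)) ds − ∫₀ᵗ C'(y(s)) θ(s) ds`. -/
def pvec (n k m : ℕ)
    (b : (Fin k → ℝ) → (Fin m → ℝ) → (Fin n → ℝ))
    (Cm : (Fin k → ℝ) → Matrix (Fin k) (Fin n) ℝ)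
    (f : (Fin k → ℝ) → (Fin m → ℝ) → (Fin k → ℝ))
    (y : ℝ → (Fin k → ℝ)) (u : ℝ → (Fin m → ℝ))
    (Φ : ℝ → Matrix (Fin n) (Fin n) ℝ) (t : ℝ) : Fin k → ℝ :=
  y t - y 0 - (∫ s in (0:ℝ)..t, f (y s) (u s))
    - ∫ s in (0:ℝ)..t, Cm (y s) *ᵥ thetaVec n k m b y u Φ s

/-- `Q(r) = ∫₀ʳ q(t) q'(t) dt ∈ ℝ^{n×n}`. -/
def Qmat (n k : ℕ) (r : ℝ) (Cm : (Fin k → ℝ) → Matrix (Fin k) (Fin n) ℝ)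
    (y : ℝ → (Fin k → ℝ)) (Φ : ℝ → Matrix (Fin n) (Fin n) ℝ) :
    Matrix (Fin n) (Fin n) ℝ :=
  Matrix.of fun i j => ∫ t in (0:ℝ)..r, (qmat n k Cm y Φ t * (qmat n k Cm y Φ t)ᵀ) i j

/-- the operator `P(y,u) = Φ(r,y;u) Q⁻¹ ∫₀ʳ q(τ) p(τ) dτ + θ(r)` of (2.16). -/
def Pop (n k m : ℕ) (r : ℝ)
    (b : (Fin k → ℝ) → (Fin m → ℝ) → (Fin n → ℝ))
    (Cm : (Fin k → ℝ) → Matrix (Fin k) (Fin n) ℝ)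
    (f : (Fin k → ℝ) → (Fin m → ℝ) → (Fin k → ℝ))
    (Φop : (ℝ → (Fin k → ℝ)) → (ℝ → (Fin m → ℝ)) → ℝ → Matrix (Fin n) (Fin n) ℝ)
    (y : ℝ → (Fin k → ℝ)) (u : ℝ → (Fin m → ℝ)) : Fin n → ℝ :=
  Φop y u r *ᵥ ((Qmat n k r Cm y (Φop y u))⁻¹ *ᵥ
      ∫ τ in (0:ℝ)..r, qmat n k Cm y (Φop y u) τ *ᵥ pvec n k m b Cm f y u (Φop y u) τ)
    + thetaVec n k m b y u (Φop y u) r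

/-- the input `u` strongly distinguishes the state `(x₀, y₀) ∈ O` in time `r > 0` :
`max_{t ∈ [0,r]} |y(t,x₀,y₀;u) − y(t,ξ,y₀;u)| > 0` for every `ξ ≠ x₀` with `(ξ,y₀) ∈ O`. -/
def StronglyDist (n k m : ℕ) (O : Set ((Fin n → ℝ) × (Fin k → ℝ)))
    (Y : (Fin n → ℝ) → (Fin k → ℝ) → (ℝ → (Fin m → ℝ)) → ℝ → (Fin k → ℝ))
    (r : ℝ) (u : ℝ → (Fin m → ℝ)) (x₀ : Fin n → ℝ) (y₀ : Fin k → ℝ) : Prop :=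
  ∀ ξ : Fin n → ℝ, (ξ, y₀) ∈ O → ξ ≠ x₀ →
    ∃ t ∈ Icc (0:ℝ) r, 0 < ‖Y x₀ y₀ u t - Y ξ y₀ u t‖

/-- hypothesis (H1) : system (1.1) is strongly observable in time `r > 0`. -/
def H1prop (n k m : ℕ) (O : Set ((Fin n → ℝ) × (Fin k → ℝ))) (U : Set (Fin m → ℝ))
    (Y : (Fin n → ℝ) → (Fin k → ℝ) → (ℝ → (Fin m → ℝ)) → ℝ → (Fin k → ℝ))
    (r : ℝ) : Prop :=
  ∀ u, AdmLoc m U u → ∀ x₀ y₀, (x₀, y₀) ∈ O → StronglyDist n k m O Y r u x₀ y₀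

/-- hypothesis (R2) : the operator `P` is completely continuous with respect to `y`. -/
def R2prop (n k m : ℕ) (r : ℝ) (U : Set (Fin m → ℝ))
    (P : (ℝ → (Fin k → ℝ)) → (ℝ → (Fin m → ℝ)) → (Fin n → ℝ)) : Prop :=
  ∀ (S : Set (ℝ → (Fin k → ℝ))) (V : Set (ℝ → (Fin m → ℝ))),
    (∀ g ∈ S, Measurable g) → (∃ M : ℝ, ∀ g ∈ S, ∀ t ∈ Icc (0:ℝ) r, ‖g t‖ ≤ M) →
    (∀ v ∈ V, Measurable v ∧ ∀ t ∈ Icc (0:ℝ) r, v t ∈ U) →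
    (∃ M : ℝ, ∀ v ∈ V, ∀ t ∈ Icc (0:ℝ) r, ‖v t‖ ≤ M) →
    (∃ K : ℝ, ∀ g ∈ S, ∀ v ∈ V, ‖P g v‖ ≤ K) ∧
      ∀ ε > (0:ℝ), ∃ δ > (0:ℝ), ∀ g ∈ S, ∀ g' ∈ S, ∀ v ∈ V,
        (∀ t ∈ Icc (0:ℝ) r, ‖g t - g' t‖ < δ) → ‖P g v - P g' v‖ < ε

/-- `z` is the solution of the hybrid observer (3.1) with sampling period `r`, output signal `yt`,
input `u` and initial condition `z₀` : between the jump times `τ_i = i r` the state flows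
according to `ż = A(yt, u) z + b(yt, u)` and at the jump times
`z(τ_{i+1}) = P(δ_{τ_i} yt, δ_{τ_i} u)`. -/
def IsObs (n k m : ℕ) (r : ℝ)
    (A : (Fin k → ℝ) → (Fin m → ℝ) → Matrix (Fin n) (Fin n) ℝ)
    (b : (Fin k → ℝ) → (Fin m → ℝ) → (Fin n → ℝ))
    (P : (ℝ → (Fin k → ℝ)) → (ℝ → (Fin m → ℝ)) → (Fin n → ℝ))
    (u : ℝ → (Fin m → ℝ)) (yt : ℝ → (Fin k → ℝ))
    (z₀ : Fin n → ℝ) (z : ℝ → (Fin n → ℝ)) : Prop :=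
  z 0 = z₀ ∧
  (∀ i : ℕ, ContinuousOn z (Ico ((i : ℝ) * r) (((i : ℝ) + 1) * r)) ∧
    ∀ t ∈ Ico ((i : ℝ) * r) (((i : ℝ) + 1) * r),
      z t = z ((i : ℝ) * r) +
        ∫ s in ((i : ℝ) * r)..t, (A (yt s) (u s) *ᵥ z s + b (yt s) (u s))) ∧
  ∀ i : ℕ, z (((i : ℝ) + 1) * r) =
    P (fun s => yt ((i : ℝ) * r + s)) (fun s => u ((i : ℝ) * r + s))

/-!
Along the trajectory, variation of constants gives `x(t) = Φ(t) x₀ + θ(t)`; substituting this into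
the output equation yields `p(t) = ∫₀ᵗ C'(s) Φ(s) x₀ ds = q'(t) x₀`, hence `∫₀ʳ q p = Q x₀`, and
the formula follows once `Q` is invertible. Since the coefficients are only measurable in time,
the variation-of-constants formula is checked in integral form: Fubini on the triangle
`0 ≤ τ ≤ s ≤ t` shows that `θ` solves the inhomogeneous equation, and Grönwall's inequality gives
uniqueness.

`Q` is a Gram matrix, `v' Q v = ∫₀ʳ |q'(t) v|² dt`, so it is positive definite unless
`q'(t) v = 0` on `[0, r]` for some `v ≠ 0`. Then `Φ v` solves the homogeneous equation without
showing up in the output, so for small `ε > 0` the perturbed state `x + ε Φ v` (kept in the open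
set `O` by compactness), paired with the same output `y`, is again a solution on `[0, r]`.
Continued beyond `r`, it is a solution starting at `(x₀ + ε v, y₀)` whose output coincides with
`y` on `[0, r]`, which contradicts strong distinguishability.
-/

open Topology

theorem LocLipOn.continuousOn {α β : Type*} [PseudoMetricSpace α] [PseudoMetricSpace β]
    {s : Set α} {g : α → β} (h : LocLipOn s g) : ContinuousOn g s := fun z hz => by
  obtain ⟨K, t, ht, hK⟩ := h z hz
  exact (hK.continuousOn z (mem_of_mem_nhdsWithin hz ht)).mono_of_mem_nhdsWithin ht

theorem IsOpen.exists_pos_forall_add_smul_mem {X E : Type*} [TopologicalSpace X]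
    [NormedAddCommGroup E] [NormedSpace ℝ E] {O : Set E} (hO : IsOpen O) {K : Set X}
    (hK : IsCompact K) {z w : X → E} (hz : ContinuousOn z K) (hzO : MapsTo z K O)
    (hw : ContinuousOn w K) : ∃ ε : ℝ, 0 < ε ∧ ∀ t ∈ K, z t + ε • w t ∈ O := by
  obtain ⟨δ, hδ, hδO⟩ :=
    (hK.image_of_continuousOn hz).exists_thickening_subset_open hO (image_subset_iff.2 hzO)
  obtain ⟨M, hM⟩ := hK.exists_bound_of_continuousOn hw
  refine ⟨δ / (|M| + 1), by positivity, fun t ht =>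
    hδO (Metric.mem_thickening_iff.2 ⟨z t, mem_image_of_mem z ht, ?_⟩)⟩
  rw [dist_eq_norm, add_sub_cancel_left, norm_smul, Real.norm_of_nonneg (by positivity)]
  calc δ / (|M| + 1) * ‖w t‖ ≤ δ / (|M| + 1) * |M| :=
        mul_le_mul_of_nonneg_left ((hM t ht).trans (le_abs_self M)) (by positivity)
    _ < δ := by
        rw [div_mul_eq_mul_div, div_lt_iff₀ (by positivity)]
        nlinarith

section Integration

variable {E : Type*} [NormedAddCommGroup E]

theorem integrableOn_Icc_of_norm_le {f : ℝ → E} {a b C : ℝ}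
    (hf : AEStronglyMeasurable f (volume.restrict (Icc a b))) (hC : ∀ t ∈ Icc a b, ‖f t‖ ≤ C) :
    IntegrableOn f (Icc a b) :=
  Integrable.of_bound hf C (ae_restrict_of_forall_mem measurableSet_Icc hC)

theorem MeasureTheory.IntegrableOn.intervalIntegrable_of_mem {f : ℝ → E} {a b c d : ℝ}
    (hf : IntegrableOn f (Icc a b)) (hc : c ∈ Icc a b) (hd : d ∈ Icc a b) :
    IntervalIntegrable f volume c d :=
  (hf.mono_set (uIcc_subset_Icc hc hd)).intervalIntegrable

theorem MeasureTheory.IntegrableOn.continuousOn_primitive_Icc [NormedSpace ℝ E] {f : ℝ → E}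
    {a b : ℝ} (hf : IntegrableOn f (Icc a b)) :
    ContinuousOn (fun t => ∫ s in a..t, f s) (Icc a b) := by
  rcases le_or_gt a b with hab | hab
  · rw [← uIcc_of_le hab] at hf ⊢
    exact continuousOn_primitive_interval hf
  · simp [Icc_eq_empty_of_lt hab]

theorem eqOn_zero_of_norm_le_mul_integral {d : ℝ → E} {a b K : ℝ}
    (hd : ContinuousOn d (Icc a b)) (hle : ∀ t ∈ Icc a b, ‖d t‖ ≤ K * ∫ s in a..t, ‖d s‖) :
    EqOn d 0 (Icc a b) := by
  set F : ℝ → ℝ := fun t => ∫ s in a..t, ‖d s‖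
  have hnd : ContinuousOn (fun s => ‖d s‖) (Icc a b) := hd.norm
  have hF : ContinuousOn F (Icc a b) := hnd.integrableOn_Icc.continuousOn_primitive_Icc
  have hF' : ∀ t ∈ Ico a b, HasDerivWithinAt F ‖d t‖ (Ici t) t := by
    intro t ht
    have hmem : Icc a b ∈ 𝓝[>] t :=
      mem_of_superset (Ioo_mem_nhdsGT ht.2) (Ioo_subset_Icc_self.trans (Icc_subset_Icc_left ht.1))
    exact integral_hasDerivWithinAt_right
      (hnd.integrableOn_Icc.intervalIntegrable_of_mem ⟨le_rfl, ht.1.trans ht.2.le⟩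
        ⟨ht.1, ht.2.le⟩)
      ((hnd.stronglyMeasurableAtFilter_nhdsWithin measurableSet_Icc t).filter_mono
        (nhdsWithin_le_of_mem hmem))
      ((hnd t (Ico_subset_Icc_self ht)).mono_of_mem_nhdsWithin hmem)
  have hF0 : EqOn F 0 (Icc a b) := fun t ht =>
    eq_zero_of_abs_deriv_le_mul_abs_self_of_eq_zero_right hF hF' (by simp [F]) (fun s hs => by
      rw [norm_norm, Real.norm_of_nonneg (integral_nonneg hs.1 fun _ _ => norm_nonneg _)]
      exact hle s (Ico_subset_Icc_self hs)) t ht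
  intro t ht
  have h := hle t ht
  rw [show (∫ s in a..t, ‖d s‖) = 0 from hF0 ht, mul_zero] at h
  exact norm_le_zero_iff.mp h

theorem integral_integral_swap_triangle [NormedSpace ℝ E] {F : ℝ → ℝ → E} {a b : ℝ} (hab : a ≤ b)
    (hF : IntegrableOn (Function.uncurry F) (Ioc a b ×ˢ Ioc a b)) :
    ∫ s in a..b, ∫ τ in a..s, F s τ = ∫ τ in a..b, ∫ s in τ..b, F s τ := by
  set G : ℝ × ℝ → E := {p | p.2 < p.1}.indicator (Function.uncurry F)
  have hG : Integrable G ((volume.restrict (Ioc a b)).prod (volume.restrict (Ioc a b))) := by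
    rw [Measure.prod_restrict]
    exact hF.indicator (measurableSet_lt measurable_snd measurable_fst)
  have hinner : ∀ s ∈ Ioc a b, ∫ τ in a..s, F s τ = ∫ τ in Ioc a b, G (s, τ) := by
    intro s hs
    have hG_s : (fun τ => G (s, τ)) = (Iio s).indicator (F s) := by
      ext τ; simp [G, indicator]
    have hset : Ioc a b ∩ Iio s = Ioo a s := by
      ext τ
      simp only [mem_inter_iff, mem_Ioc, mem_Iio, mem_Ioo]
      exact ⟨fun h => ⟨h.1.1, h.2⟩, fun h => ⟨⟨h.1, h.2.le.trans hs.2⟩, h.2⟩⟩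
    rw [hG_s, setIntegral_indicator measurableSet_Iio, hset, integral_of_le hs.1.le,
      integral_Ioc_eq_integral_Ioo]
  have houter : ∀ τ ∈ Ioc a b, ∫ s in Ioc a b, G (s, τ) = ∫ s in τ..b, F s τ := by
    intro τ hτ
    have hG_τ : (fun s => G (s, τ)) = (Ioi τ).indicator (fun s => F s τ) := by
      ext s; simp [G, indicator]
    rw [hG_τ, setIntegral_indicator measurableSet_Ioi, integral_of_le hτ.2, Ioc_inter_Ioi,
      max_eq_right hτ.1.le]
  rw [integral_of_le hab, setIntegral_congr_fun measurableSet_Ioc hinner,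
    integral_integral_swap (f := fun s τ => G (s, τ)) hG, integral_of_le hab]
  exact setIntegral_congr_fun measurableSet_Ioc houter

end Integration

section MatrixIntegral

variable {ι κ : Type*} [Fintype ι] [Fintype κ] {a b : ℝ}

theorem intervalIntegrable_pi_iff {f : ℝ → ι → ℝ} :
    IntervalIntegrable f volume a b ↔ ∀ i, IntervalIntegrable (fun s => f s i) volume a b := by
  simp only [intervalIntegrable_iff, IntegrableOn, integrable_pi_iff]

theorem intervalIntegral.integral_pi_apply {f : ℝ → ι → ℝ} (hf : IntervalIntegrable f volume a b)
    (i : ι) : (∫ s in a..b, f s) i = ∫ s in a..b, f s i :=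
  ((ContinuousLinearMap.proj (R := ℝ) (φ := fun _ : ι => ℝ) i).intervalIntegral_comp_comm hf).symm

theorem Matrix.mulVec_intervalIntegral (M : Matrix ι κ ℝ) {f : ℝ → κ → ℝ}
    (hf : IntervalIntegrable f volume a b) :
    M *ᵥ ∫ s in a..b, f s = ∫ s in a..b, M *ᵥ f s :=
  (M.mulVecLin.toContinuousLinearMap.intervalIntegral_comp_comm hf).symm

theorem dotProduct_intervalIntegral (v : ι → ℝ) {f : ℝ → ι → ℝ}
    (hf : IntervalIntegrable f volume a b) :
    v ⬝ᵥ ∫ s in a..b, f s = ∫ s in a..b, v ⬝ᵥ f s := by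
  simp only [dotProduct, integral_pi_apply hf]
  rw [intervalIntegral.integral_finsetSum fun i _ =>
    (intervalIntegrable_pi_iff.1 hf i).const_mul (v i)]
  simp_rw [intervalIntegral.integral_const_mul]

theorem Matrix.of_intervalIntegral_mulVec {M : ℝ → Matrix ι κ ℝ}
    (hM : ∀ i j, IntervalIntegrable (fun s => M s i j) volume a b) (v : κ → ℝ) :
    (Matrix.of fun i j => ∫ s in a..b, M s i j) *ᵥ v = ∫ s in a..b, M s *ᵥ v := by
  have hMv : ∀ i, IntervalIntegrable (fun s => ∑ j, M s i j * v j) volume a b := fun i => by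
    simpa only [Finset.sum_fn] using IntervalIntegrable.sum _ fun j _ => (hM i j).mul_const (v j)
  ext i
  rw [integral_pi_apply (f := fun s => M s *ᵥ v) (intervalIntegrable_pi_iff.2 hMv)]
  simp only [mulVec, dotProduct, of_apply]
  rw [intervalIntegral.integral_finsetSum fun j _ => (hM i j).mul_const (v j)]
  simp_rw [intervalIntegral.integral_mul_const]

end MatrixIntegral

section MatrixBounds

variable {α ι κ : Type*}

theorem ContinuousOn.matrix_elem [TopologicalSpace α] {s : Set α} {M : α → Matrix ι κ ℝ}
    (hM : ContinuousOn M s) (i : ι) (j : κ) : ContinuousOn (fun a => M a i j) s :=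
  (continuous_apply j).comp_continuousOn ((continuous_apply i).comp_continuousOn hM)

theorem ContinuousOn.matrix_transpose [TopologicalSpace α] {s : Set α} {M : α → Matrix ι κ ℝ}
    (hM : ContinuousOn M s) : ContinuousOn (fun a => (M a)ᵀ) s :=
  continuous_id.matrix_transpose.comp_continuousOn hM

variable [Fintype κ]

theorem ContinuousOn.matrix_mulVec [TopologicalSpace α] {s : Set α} {M : α → Matrix ι κ ℝ}
    {w : α → κ → ℝ} (hM : ContinuousOn M s) (hw : ContinuousOn w s) :
    ContinuousOn (fun a => M a *ᵥ w a) s :=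
  (continuous_fst.matrix_mulVec continuous_snd).comp_continuousOn (hM.prodMk hw)

variable [Fintype ι]

theorem Matrix.norm_mulVec_le_of_norm_le {M : Matrix ι κ ℝ} {C : ℝ} (hM : ‖fun i j => M i j‖ ≤ C)
    (v : κ → ℝ) : ‖M *ᵥ v‖ ≤ Fintype.card κ * C * ‖v‖ := by
  have hC : 0 ≤ C := (norm_nonneg _).trans hM
  refine (pi_norm_le_iff_of_nonneg (by positivity)).2 fun i => ?_
  calc ‖(M *ᵥ v) i‖ = |∑ j, M i j * v j| := rfl
    _ ≤ ∑ j, |M i j| * |v j| := by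
        simpa only [abs_mul] using Finset.abs_sum_le_sum_abs (fun j => M i j * v j) Finset.univ
    _ ≤ ∑ _j : κ, C * ‖v‖ := Finset.sum_le_sum fun j _ =>
        mul_le_mul ((norm_le_pi_norm (M i) j).trans
          ((norm_le_pi_norm (fun i j => M i j) i).trans hM)) (norm_le_pi_norm v j) (abs_nonneg _) hC
    _ = Fintype.card κ * C * ‖v‖ := by simp [mul_assoc]

theorem IsCompact.exists_norm_mulVec_le [TopologicalSpace α] {K : Set α} (hK : IsCompact K)
    {M : α → Matrix ι κ ℝ} (hM : ContinuousOn M K) :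
    ∃ C, 0 ≤ C ∧ ∀ s ∈ K, ∀ v, ‖M s *ᵥ v‖ ≤ C * ‖v‖ := by
  obtain ⟨C, hC⟩ := hK.exists_bound_of_continuousOn (f := fun s i j => M s i j) hM
  exact ⟨Fintype.card κ * max C 0, by positivity, fun s hs v =>
    Matrix.norm_mulVec_le_of_norm_le ((hC s hs).trans (le_max_left C 0)) v⟩

variable [MeasurableSpace α]

theorem aestronglyMeasurable_mulVec {μ : Measure α} {M : α → Matrix ι κ ℝ} {w : α → κ → ℝ}
    (hM : ∀ i j, AEStronglyMeasurable (fun a => M a i j) μ) (hw : AEStronglyMeasurable w μ) :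
    AEStronglyMeasurable (fun a => M a *ᵥ w a) μ := by
  refine (aemeasurable_pi_lambda _ fun i => ?_).aestronglyMeasurable
  exact Finset.aemeasurable_fun_sum Finset.univ fun j _ =>
    (hM i j).aemeasurable.mul (hw.aemeasurable.eval j)

structure IsEssBoundedMatrix (M : α → Matrix ι κ ℝ) (μ : Measure α) : Prop where
  aestronglyMeasurable : ∀ i j, AEStronglyMeasurable (fun a => M a i j) μ
  bound : ∃ C, 0 ≤ C ∧ ∀ᵐ a ∂μ, ∀ v, ‖M a *ᵥ v‖ ≤ C * ‖v‖

theorem IsEssBoundedMatrix.integrable_mulVec {M : α → Matrix ι κ ℝ} {μ : Measure α}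
    (hM : IsEssBoundedMatrix M μ) {w : α → κ → ℝ} (hw : Integrable w μ) :
    Integrable (fun a => M a *ᵥ w a) μ := by
  obtain ⟨C, -, hC⟩ := hM.bound
  exact (hw.norm.const_mul C).mono' (aestronglyMeasurable_mulVec hM.aestronglyMeasurable hw.1)
    (hC.mono fun a ha => ha (w a))

theorem IsCompact.isEssBoundedMatrix [TopologicalSpace α] [OpensMeasurableSpace α] {K : Set α}
    (hK : IsCompact K) (hKm : MeasurableSet K) {M : α → Matrix ι κ ℝ} (hM : ContinuousOn M K)
    (μ : Measure α) : IsEssBoundedMatrix M (μ.restrict K) where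
  aestronglyMeasurable i j := (hM.matrix_elem i j).aestronglyMeasurable hKm
  bound := (hK.exists_norm_mulVec_le hM).imp fun _ hC => ⟨hC.1, ae_restrict_of_forall_mem hKm hC.2⟩

end MatrixBounds

structure IsTransitionOn {ι : Type*} [Fintype ι] [DecidableEq ι] (At Φ : ℝ → Matrix ι ι ℝ)
    (T : ℝ) : Prop where
  essBounded : IsEssBoundedMatrix At (volume.restrict (Icc 0 T))
  continuous : Continuous Φ
  isUnit_det : ∀ t ∈ Icc 0 T, IsUnit (Φ t).det
  mulVec_eq : ∀ t ∈ Icc 0 T, ∀ c, Φ t *ᵥ c = c + ∫ s in 0..t, At s *ᵥ (Φ s *ᵥ c)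

theorem IsEssBoundedMatrix.eqOn_zero_of_eq_integral {ι : Type*} [Fintype ι]
    {At : ℝ → Matrix ι ι ℝ} {T : ℝ} (hA : IsEssBoundedMatrix At (volume.restrict (Icc 0 T)))
    {d : ℝ → ι → ℝ} (hd : ContinuousOn d (Icc 0 T))
    (hde : ∀ t ∈ Icc 0 T, d t = ∫ s in 0..t, At s *ᵥ d s) : EqOn d 0 (Icc 0 T) := by
  obtain ⟨C, -, hC⟩ := hA.bound
  have hAd : IntegrableOn (fun s => At s *ᵥ d s) (Icc 0 T) :=
    hA.integrable_mulVec hd.integrableOn_Icc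
  refine eqOn_zero_of_norm_le_mul_integral (K := C) hd fun t ht => ?_
  have h0 : (0:ℝ) ∈ Icc 0 T := ⟨le_rfl, ht.1.trans ht.2⟩
  calc ‖d t‖ = ‖∫ s in 0..t, At s *ᵥ d s‖ := by rw [← hde t ht]
    _ ≤ ∫ s in 0..t, ‖At s *ᵥ d s‖ := norm_integral_le_integral_norm ht.1
    _ ≤ ∫ s in 0..t, C * ‖d s‖ :=
        integral_mono_ae_restrict ht.1 (IntegrableOn.intervalIntegrable_of_mem hAd.norm h0 ht)
          (IntegrableOn.intervalIntegrable_of_mem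
            (Integrable.const_mul hd.norm.integrableOn_Icc C) h0 ht)
          ((ae_restrict_of_ae_restrict_of_subset (Icc_subset_Icc_right ht.2) hC).mono
            fun s hs => hs (d s))
    _ = C * ∫ s in 0..t, ‖d s‖ := integral_const_mul C _

namespace IsTransitionOn

variable {ι : Type*} [Fintype ι] [DecidableEq ι] {At Φ : ℝ → Matrix ι ι ℝ} {T : ℝ}

theorem apply_zero_mulVec (h : IsTransitionOn At Φ T) (hT : 0 ≤ T) (c : ι → ℝ) : Φ 0 *ᵥ c = c := by
  simpa using h.mulVec_eq 0 ⟨le_rfl, hT⟩ c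

theorem integral_mulVec_eq_sub (h : IsTransitionOn At Φ T) {τ t : ℝ} (hτ : τ ∈ Icc 0 T)
    (ht : t ∈ Icc 0 T) (c : ι → ℝ) :
    ∫ s in τ..t, At s *ᵥ (Φ s *ᵥ c) = Φ t *ᵥ c - Φ τ *ᵥ c := by
  have hi : IntegrableOn (fun s => At s *ᵥ (Φ s *ᵥ c)) (Icc 0 T) :=
    h.essBounded.integrable_mulVec (h.continuous.matrix_mulVec continuous_const).integrableOn_Icc
  have h0 : (0:ℝ) ∈ Icc 0 T := ⟨le_rfl, ht.1.trans ht.2⟩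
  rw [← integral_interval_sub_left (hi.intervalIntegrable_of_mem h0 ht)
    (hi.intervalIntegrable_of_mem h0 hτ), h.mulVec_eq t ht, h.mulVec_eq τ hτ]
  abel

theorem continuousOn_inv (h : IsTransitionOn At Φ T) :
    ContinuousOn (fun t => (Φ t)⁻¹) (Icc 0 T) := fun t ht =>
  ((continuousAt_matrix_inv _ (NormedRing.inverse_continuousAt (h.isUnit_det t ht).unit)).comp
    h.continuous.continuousAt).continuousWithinAt

theorem integrableOn_inv_mulVec (h : IsTransitionOn At Φ T) {bt : ℝ → ι → ℝ}
    (hb : IntegrableOn bt (Icc 0 T)) : IntegrableOn (fun τ => (Φ τ)⁻¹ *ᵥ bt τ) (Icc 0 T) :=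
  (isCompact_Icc.isEssBoundedMatrix measurableSet_Icc h.continuousOn_inv volume).integrable_mulVec
    hb

theorem integrableOn_uncurry_mulVec (h : IsTransitionOn At Φ T) {ψ : ℝ → ι → ℝ}
    (hψ : IntegrableOn ψ (Icc 0 T)) {t : ℝ} (ht : t ∈ Icc 0 T) :
    IntegrableOn (Function.uncurry fun s τ => At s *ᵥ (Φ s *ᵥ ψ τ)) (Ioc 0 t ×ˢ Ioc 0 t) := by
  obtain ⟨C, hC0, hC⟩ := h.essBounded.bound
  obtain ⟨CΦ, -, hCΦ⟩ := isCompact_Icc.exists_norm_mulVec_le (K := Icc 0 T)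
    h.continuous.continuousOn
  have hIoc : Ioc 0 t ⊆ Icc 0 T := Ioc_subset_Icc_self.trans (Icc_subset_Icc_right ht.2)
  have hψt : Integrable ψ (volume.restrict (Ioc 0 t)) := hψ.mono_set hIoc
  rw [IntegrableOn, Measure.volume_eq_prod, ← Measure.prod_restrict]
  refine Integrable.mono' ((hψt.norm.const_mul CΦ).const_mul C |>.comp_snd _)
    (aestronglyMeasurable_mulVec
      (fun i j => ((h.essBounded.aestronglyMeasurable i j).mono_measure
        (Measure.restrict_mono hIoc le_rfl)).comp_fst)
      (aestronglyMeasurable_mulVec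
        (fun i j => ((h.continuous.matrix_elem i j).comp continuous_fst).aestronglyMeasurable)
        hψt.1.comp_snd)) ?_
  have hbound : ∀ᵐ s ∂volume.restrict (Ioc 0 t), ∀ v,
      ‖At s *ᵥ (Φ s *ᵥ v)‖ ≤ C * (CΦ * ‖v‖) := by
    filter_upwards [ae_restrict_of_ae_restrict_of_subset hIoc hC,
      ae_restrict_mem measurableSet_Ioc] with s hs hsI v
    exact (hs _).trans (mul_le_mul_of_nonneg_left (hCΦ s (hIoc hsI) v) hC0)
  exact Measure.quasiMeasurePreserving_fst.ae hbound |>.mono fun z hz => hz (ψ z.2)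

theorem mulVec_integral_inv_mulVec (h : IsTransitionOn At Φ T) {bt : ℝ → ι → ℝ}
    (hb : IntegrableOn bt (Icc 0 T)) {t : ℝ} (ht : t ∈ Icc 0 T) :
    Φ t *ᵥ ∫ τ in 0..t, (Φ τ)⁻¹ *ᵥ bt τ =
      ∫ s in 0..t, (At s *ᵥ (Φ s *ᵥ ∫ τ in 0..s, (Φ τ)⁻¹ *ᵥ bt τ) + bt s) := by
  set ψ : ℝ → ι → ℝ := fun τ => (Φ τ)⁻¹ *ᵥ bt τ
  have h0 : (0:ℝ) ∈ Icc 0 T := ⟨le_rfl, ht.1.trans ht.2⟩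
  have hsub : Icc 0 t ⊆ Icc 0 T := Icc_subset_Icc_right ht.2
  have hψ : IntegrableOn ψ (Icc 0 T) := h.integrableOn_inv_mulVec hb
  have hΦψ (s : ℝ) : IntegrableOn (fun τ => Φ s *ᵥ ψ τ) (Icc 0 T) :=
    (Φ s).mulVecLin.toContinuousLinearMap.integrable_comp hψ
  have hG : IntegrableOn (fun s => At s *ᵥ (Φ s *ᵥ ∫ τ in 0..s, ψ τ)) (Icc 0 T) :=
    h.essBounded.integrable_mulVec <| ContinuousOn.integrableOn_Icc <|
      h.continuous.continuousOn.matrix_mulVec hψ.continuousOn_primitive_Icc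
  have hbt : ∀ τ ∈ Icc 0 T, Φ τ *ᵥ ψ τ = bt τ := fun τ hτ => by
    simp only [ψ, mulVec_mulVec, mul_nonsing_inv _ (h.isUnit_det τ hτ), one_mulVec]
  have hF := h.integrableOn_uncurry_mulVec hψ ht
  have hsplit : ∫ τ in 0..t, (Φ t *ᵥ ψ τ - Φ τ *ᵥ ψ τ) =
      Φ t *ᵥ (∫ τ in 0..t, ψ τ) - ∫ τ in 0..t, bt τ := by
    rw [integral_congr (g := fun τ => Φ t *ᵥ ψ τ - bt τ) fun τ hτ => by
        rw [uIcc_of_le ht.1] at hτ; rw [hbt τ (hsub hτ)],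
      integral_sub ((hΦψ t).intervalIntegrable_of_mem h0 ht) (hb.intervalIntegrable_of_mem h0 ht),
      mulVec_intervalIntegral _ (hψ.intervalIntegrable_of_mem h0 ht)]
  calc Φ t *ᵥ ∫ τ in 0..t, ψ τ
      = (∫ τ in 0..t, (Φ t *ᵥ ψ τ - Φ τ *ᵥ ψ τ)) + ∫ τ in 0..t, bt τ := by
        rw [hsplit, sub_add_cancel]
    _ = (∫ τ in 0..t, ∫ s in τ..t, At s *ᵥ (Φ s *ᵥ ψ τ)) + ∫ τ in 0..t, bt τ := by
        congr 1
        refine integral_congr fun τ hτ => ?_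
        rw [uIcc_of_le ht.1] at hτ
        exact (h.integral_mulVec_eq_sub (hsub hτ) ht (ψ τ)).symm
    _ = (∫ s in 0..t, ∫ τ in 0..s, At s *ᵥ (Φ s *ᵥ ψ τ)) + ∫ τ in 0..t, bt τ := by
        rw [integral_integral_swap_triangle ht.1 hF]
    _ = (∫ s in 0..t, At s *ᵥ (Φ s *ᵥ ∫ τ in 0..s, ψ τ)) + ∫ τ in 0..t, bt τ := by
        congr 1
        refine integral_congr fun s hs => ?_
        rw [uIcc_of_le ht.1] at hs
        rw [mulVec_intervalIntegral _ (hψ.intervalIntegrable_of_mem h0 (hsub hs)),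
          mulVec_intervalIntegral _ ((hΦψ s).intervalIntegrable_of_mem h0 (hsub hs))]
    _ = _ := (integral_add (hG.intervalIntegrable_of_mem h0 ht)
        (hb.intervalIntegrable_of_mem h0 ht)).symm

theorem eq_mulVec_add_mulVec_integral (h : IsTransitionOn At Φ T) {bt : ℝ → ι → ℝ}
    (hb : IntegrableOn bt (Icc 0 T)) {x : ℝ → ι → ℝ} (hx : ContinuousOn x (Icc 0 T))
    (hxe : ∀ t ∈ Icc 0 T, x t = x 0 + ∫ s in 0..t, (At s *ᵥ x s + bt s)) {t : ℝ}
    (ht : t ∈ Icc 0 T) : x t = Φ t *ᵥ x 0 + Φ t *ᵥ ∫ τ in 0..t, (Φ τ)⁻¹ *ᵥ bt τ := by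
  set θ : ℝ → ι → ℝ := fun s => Φ s *ᵥ ∫ τ in 0..s, (Φ τ)⁻¹ *ᵥ bt τ
  have hθ : ContinuousOn θ (Icc 0 T) :=
    h.continuous.continuousOn.matrix_mulVec
      (h.integrableOn_inv_mulVec hb).continuousOn_primitive_Icc
  have hΦx : ContinuousOn (fun s => Φ s *ᵥ x 0) (Icc 0 T) :=
    (h.continuous.matrix_mulVec continuous_const).continuousOn
  set d : ℝ → ι → ℝ := fun s => x s - (Φ s *ᵥ x 0 + θ s)
  have hde : ∀ t ∈ Icc 0 T, d t = ∫ s in 0..t, At s *ᵥ d s := by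
    intro t ht
    have h0 : (0:ℝ) ∈ Icc 0 T := ⟨le_rfl, ht.1.trans ht.2⟩
    have hAI {w : ℝ → ι → ℝ} (hw : ContinuousOn w (Icc 0 T)) :
        IntervalIntegrable (fun s => At s *ᵥ w s) volume 0 t :=
      IntegrableOn.intervalIntegrable_of_mem (h.essBounded.integrable_mulVec hw.integrableOn_Icc)
        h0 ht
    have hbI : IntervalIntegrable bt volume 0 t := hb.intervalIntegrable_of_mem h0 ht
    calc d t = ((∫ s in 0..t, (At s *ᵥ x s + bt s)) - ∫ s in 0..t, At s *ᵥ (Φ s *ᵥ x 0))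
          - ∫ s in 0..t, (At s *ᵥ θ s + bt s) := by
          simp only [d, θ]
          rw [← h.mulVec_integral_inv_mulVec hb ht]
          nth_rewrite 1 [hxe t ht]
          rw [h.mulVec_eq t ht]
          abel
      _ = ∫ s in 0..t, ((At s *ᵥ x s + bt s) - At s *ᵥ (Φ s *ᵥ x 0) - (At s *ᵥ θ s + bt s)) := by
          rw [integral_sub (((hAI hx).add hbI).sub (hAI hΦx)) ((hAI hθ).add hbI),
            integral_sub ((hAI hx).add hbI) (hAI hΦx)]
      _ = ∫ s in 0..t, At s *ᵥ d s := integral_congr fun s _ => by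
          simp only [d, mulVec_sub, mulVec_add]
          abel
  have hd0 := (h.essBounded.eqOn_zero_of_eq_integral (hx.sub (hΦx.add hθ)) hde) ht
  exact sub_eq_zero.mp hd0

end IsTransitionOn

section Trajectory

variable {k m : ℕ} {Ω : Set (Fin k → ℝ)} {U : Set (Fin m → ℝ)} {T : ℝ} {u : ℝ → Fin m → ℝ}
  {y : ℝ → Fin k → ℝ}

theorem AdmOn.aestronglyMeasurable_comp {E : Type*} [TopologicalSpace E]
    {g : (Fin k → ℝ) × (Fin m → ℝ) → E} (hg : ContinuousOn g (Ω ×ˢ U)) (hu : AdmOn m T U u)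
    (hy : ContinuousOn y (Icc 0 T)) (hyΩ : MapsTo y (Icc 0 T) Ω) :
    AEStronglyMeasurable (fun t => g (y t, u t)) (volume.restrict (Icc 0 T)) := by
  rcases lt_or_ge T 0 with hT | hT
  · simp [Icc_eq_empty_of_lt hT]
  set π : ℝ → Icc (0:ℝ) T := projIcc 0 T hT
  have hπ : Continuous fun t => (π t : ℝ) := continuous_subtype_val.comp continuous_projIcc
  have hp : Measurable fun t =>
      (⟨(y (π t), u (π t)), hyΩ (π t).2, hu.2.1 _ (π t).2⟩ : Ω ×ˢ U) :=
    ((hy.comp_continuous hπ fun t => (π t).2).measurable.prodMk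
      (hu.1.comp hπ.measurable)).subtype_mk
  refine ((continuousOn_iff_continuous_domRestrict.1 hg).comp_aestronglyMeasurable
    hp.aestronglyMeasurable).congr ?_
  filter_upwards [ae_restrict_mem measurableSet_Icc] with t ht
  simp [π, projIcc_of_mem hT ht]

theorem AdmOn.exists_norm_comp_le {E : Type*} [NormedAddCommGroup E] (hU : IsClosed U)
    {g : (Fin k → ℝ) × (Fin m → ℝ) → E} (hg : ContinuousOn g (Ω ×ˢ U)) (hu : AdmOn m T U u)
    (hy : ContinuousOn y (Icc 0 T)) (hyΩ : MapsTo y (Icc 0 T) Ω) :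
    ∃ C, ∀ t ∈ Icc 0 T, ‖g (y t, u t)‖ ≤ C := by
  obtain ⟨M, hM⟩ := hu.2.2
  have hK : IsCompact ((y '' Icc 0 T) ×ˢ (U ∩ Metric.closedBall 0 M)) :=
    (isCompact_Icc.image_of_continuousOn hy).prod ((isCompact_closedBall 0 M).inter_left hU)
  obtain ⟨C, hC⟩ := hK.exists_bound_of_continuousOn
    (hg.mono (prod_mono (image_subset_iff.2 hyΩ) inter_subset_left))
  exact ⟨C, fun t ht =>
    hC _ ⟨mem_image_of_mem y ht, hu.2.1 t ht, mem_closedBall_zero_iff.2 (hM t ht)⟩⟩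

theorem AdmOn.integrableOn_comp {E : Type*} [NormedAddCommGroup E] (hU : IsClosed U)
    {g : (Fin k → ℝ) × (Fin m → ℝ) → E} (hg : ContinuousOn g (Ω ×ˢ U)) (hu : AdmOn m T U u)
    (hy : ContinuousOn y (Icc 0 T)) (hyΩ : MapsTo y (Icc 0 T) Ω) :
    IntegrableOn (fun t => g (y t, u t)) (Icc 0 T) :=
  let ⟨_, hC⟩ := hu.exists_norm_comp_le hU hg hy hyΩ
  integrableOn_Icc_of_norm_le (hu.aestronglyMeasurable_comp hg hy hyΩ) hC

theorem AdmOn.isEssBoundedMatrix_comp {ι κ : Type*} [Fintype ι] [Fintype κ] (hU : IsClosed U)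
    {A : (Fin k → ℝ) → (Fin m → ℝ) → Matrix ι κ ℝ}
    (hA : ∀ i j, ContinuousOn (fun p : (Fin k → ℝ) × (Fin m → ℝ) => A p.1 p.2 i j) (Ω ×ˢ U))
    (hu : AdmOn m T U u) (hy : ContinuousOn y (Icc 0 T)) (hyΩ : MapsTo y (Icc 0 T) Ω) :
    IsEssBoundedMatrix (fun t => A (y t) (u t)) (volume.restrict (Icc 0 T)) where
  aestronglyMeasurable i j := hu.aestronglyMeasurable_comp (hA i j) hy hyΩ
  bound := by
    obtain ⟨C, hC⟩ := hu.exists_norm_comp_le hU (g := fun p i j => A p.1 p.2 i j)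
      (continuousOn_pi.2 fun i => continuousOn_pi.2 (hA i)) hy hyΩ
    refine ⟨Fintype.card κ * max C 0, by positivity, ae_restrict_of_forall_mem measurableSet_Icc
      fun t ht v => ?_⟩
    exact Matrix.norm_mulVec_le_of_norm_le ((hC t ht).trans (le_max_left C 0)) v

theorem AdmLoc.admOn {u : ℝ → Fin m → ℝ} (hu : AdmLoc m U u) (T : ℝ) : AdmOn m T U u :=
  ⟨hu.1, fun t ht => hu.2.1 t ht.1, hu.2.2 T⟩

theorem AdmLoc.shift {u : ℝ → Fin m → ℝ} (hu : AdmLoc m U u) {r : ℝ} (hr : 0 ≤ r) :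
    AdmLoc m U (fun s => u (r + s)) := by
  refine ⟨hu.1.comp (measurable_const_add r), fun t ht => hu.2.1 _ (by linarith), fun T => ?_⟩
  obtain ⟨M, hM⟩ := hu.2.2 (r + T)
  exact ⟨M, fun t ht => hM _ ⟨by linarith [ht.1], by linarith [ht.2]⟩⟩

end Trajectory

theorem integral_eq_of_shift {E : Type*} [NormedAddCommGroup E] [NormedSpace ℝ E] {z F : ℝ → E}
    {r : ℝ} (hr : 0 ≤ r) (h₁ : ∀ t ∈ Icc 0 r, z t = z 0 + ∫ s in 0..t, F s)
    (h₂ : ∀ t, 0 ≤ t → z (r + t) = z r + ∫ s in 0..t, F (r + s))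
    (hF : ∀ t, 0 ≤ t → IntervalIntegrable F volume 0 t) {t : ℝ} (ht : 0 ≤ t) :
    z t = z 0 + ∫ s in 0..t, F s := by
  rcases le_total t r with htr | hrt
  · exact h₁ t ⟨ht, htr⟩
  have hz := h₂ (t - r) (sub_nonneg.2 hrt)
  rw [add_sub_cancel, integral_comp_add_left, add_zero, add_sub_cancel] at hz
  have hr' : r ∈ uIcc 0 t := mem_uIcc_of_le hr hrt
  rw [hz, h₁ r ⟨hr, le_rfl⟩, add_assoc, integral_add_adjacent_intervals
    ((hF t ht).mono_set (uIcc_subset_uIcc left_mem_uIcc hr'))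
    ((hF t ht).mono_set (uIcc_subset_uIcc hr' right_mem_uIcc))]

section Concatenation

variable {E : Type*} {r : ℝ} {z₁ z₂ : ℝ → E}

def concatAt (r : ℝ) (z₁ z₂ : ℝ → E) (t : ℝ) : E := if t ≤ r then z₁ t else z₂ (t - r)

theorem concatAt_of_le {t : ℝ} (ht : t ≤ r) : concatAt r z₁ z₂ t = z₁ t := if_pos ht

theorem concatAt_add (h : z₂ 0 = z₁ r) {s : ℝ} (hs : 0 ≤ s) : concatAt r z₁ z₂ (r + s) = z₂ s := by
  rcases hs.eq_or_lt with rfl | hs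
  · simp [concatAt, h]
  · simp [concatAt, hs]

end Concatenation

section System

variable {n k m : ℕ} {O : Set ((Fin n → ℝ) × (Fin k → ℝ))} {Ω : Set (Fin k → ℝ)}
  {U : Set (Fin m → ℝ)} {A : (Fin k → ℝ) → (Fin m → ℝ) → Matrix (Fin n) (Fin n) ℝ}
  {b : (Fin k → ℝ) → (Fin m → ℝ) → (Fin n → ℝ)} {Cm : (Fin k → ℝ) → Matrix (Fin k) (Fin n) ℝ}
  {f : (Fin k → ℝ) → (Fin m → ℝ) → (Fin k → ℝ)} {T r : ℝ} {u : ℝ → Fin m → ℝ}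
  {x : ℝ → Fin n → ℝ} {y : ℝ → Fin k → ℝ} {Φ : ℝ → Matrix (Fin n) (Fin n) ℝ}

structure ContinuousCoeffs (Ω : Set (Fin k → ℝ)) (U : Set (Fin m → ℝ))
    (A : (Fin k → ℝ) → (Fin m → ℝ) → Matrix (Fin n) (Fin n) ℝ)
    (b : (Fin k → ℝ) → (Fin m → ℝ) → (Fin n → ℝ)) (Cm : (Fin k → ℝ) → Matrix (Fin k) (Fin n) ℝ)
    (f : (Fin k → ℝ) → (Fin m → ℝ) → (Fin k → ℝ)) : Prop where
  continuousOn_A : ∀ i j, ContinuousOn (fun p : (Fin k → ℝ) × (Fin m → ℝ) => A p.1 p.2 i j) (Ω ×ˢ U)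
  continuousOn_b : ContinuousOn (fun p : (Fin k → ℝ) × (Fin m → ℝ) => b p.1 p.2) (Ω ×ˢ U)
  continuousOn_Cm : ∀ i j, ContinuousOn (fun y => Cm y i j) Ω
  continuousOn_f : ContinuousOn (fun p : (Fin k → ℝ) × (Fin m → ℝ) => f p.1 p.2) (Ω ×ˢ U)

structure IsSystemSolOn (O : Set ((Fin n → ℝ) × (Fin k → ℝ)))
    (A : (Fin k → ℝ) → (Fin m → ℝ) → Matrix (Fin n) (Fin n) ℝ)
    (b : (Fin k → ℝ) → (Fin m → ℝ) → (Fin n → ℝ)) (Cm : (Fin k → ℝ) → Matrix (Fin k) (Fin n) ℝ)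
    (f : (Fin k → ℝ) → (Fin m → ℝ) → (Fin k → ℝ)) (T : ℝ) (u : ℝ → Fin m → ℝ)
    (x : ℝ → Fin n → ℝ) (y : ℝ → Fin k → ℝ) : Prop where
  continuousOn_x : ContinuousOn x (Icc 0 T)
  continuousOn_y : ContinuousOn y (Icc 0 T)
  mem : ∀ t ∈ Icc 0 T, (x t, y t) ∈ O
  x_eq : ∀ t ∈ Icc 0 T, x t = x 0 + ∫ s in (0:ℝ)..t, (A (y s) (u s) *ᵥ x s + b (y s) (u s))
  y_eq : ∀ t ∈ Icc 0 T, y t = y 0 + ∫ s in (0:ℝ)..t, (f (y s) (u s) + Cm (y s) *ᵥ x s)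

namespace ContinuousCoeffs

theorem continuousOn_Cm_comp (hc : ContinuousCoeffs Ω U A b Cm f) (hy : ContinuousOn y (Icc 0 T))
    (hyΩ : MapsTo y (Icc 0 T) Ω) : ContinuousOn (fun s => Cm (y s)) (Icc 0 T) :=
  continuousOn_pi.2 fun i => continuousOn_pi.2 fun j => (hc.continuousOn_Cm i j).comp hy hyΩ

theorem integrableOn_integrands (hc : ContinuousCoeffs Ω U A b Cm f) (hU : IsClosed U)
    (hu : AdmOn m T U u) (hx : ContinuousOn x (Icc 0 T)) (hy : ContinuousOn y (Icc 0 T))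
    (hyΩ : MapsTo y (Icc 0 T) Ω) :
    IntegrableOn (fun s => A (y s) (u s) *ᵥ x s + b (y s) (u s)) (Icc 0 T) ∧
      IntegrableOn (fun s => f (y s) (u s) + Cm (y s) *ᵥ x s) (Icc 0 T) :=
  ⟨((hu.isEssBoundedMatrix_comp hU hc.continuousOn_A hy hyΩ).integrable_mulVec
      hx.integrableOn_Icc).add (hu.integrableOn_comp hU hc.continuousOn_b hy hyΩ),
    (hu.integrableOn_comp hU hc.continuousOn_f hy hyΩ).add
      ((hc.continuousOn_Cm_comp hy hyΩ).matrix_mulVec hx).integrableOn_Icc⟩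

end ContinuousCoeffs

theorem IsSystemSol.isSystemSolOn (h : IsSystemSol n k m O A b Cm f u x y) (T : ℝ) :
    IsSystemSolOn O A b Cm f T u x y :=
  ⟨h.1.mono Icc_subset_Ici_self, h.2.1.mono Icc_subset_Ici_self, fun t ht => h.2.2.1 t ht.1,
    fun t ht => h.2.2.2.1 t ht.1, fun t ht => h.2.2.2.2 t ht.1⟩

theorem IsSystemSolOn.congr (h : IsSystemSolOn O A b Cm f T u x y) {x' : ℝ → Fin n → ℝ}
    {y' : ℝ → Fin k → ℝ} (hx : EqOn x' x (Icc 0 T)) (hy : EqOn y' y (Icc 0 T)) :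
    IsSystemSolOn O A b Cm f T u x' y' := by
  have hsub {t : ℝ} (ht : t ∈ Icc 0 T) : uIcc 0 t ⊆ Icc 0 T :=
    uIcc_subset_Icc ⟨le_rfl, ht.1.trans ht.2⟩ ht
  refine ⟨h.continuousOn_x.congr hx, h.continuousOn_y.congr hy,
    fun t ht => hx ht ▸ hy ht ▸ h.mem t ht, fun t ht => ?_, fun t ht => ?_⟩
  · rw [hx ht, hx (hsub ht left_mem_uIcc), h.x_eq t ht]
    exact congrArg _ (integral_congr fun s hs => by rw [hx (hsub ht hs), hy (hsub ht hs)])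
  · rw [hy ht, hy (hsub ht left_mem_uIcc), h.y_eq t ht]
    exact congrArg _ (integral_congr fun s hs => by rw [hx (hsub ht hs), hy (hsub ht hs)])

theorem IsSystemSolOn.isSystemSol_of_shift (hc : ContinuousCoeffs Ω U A b Cm f)
    (hU : IsClosed U) (hOΩ : MapsTo Prod.snd O Ω) (hu : AdmLoc m U u) (hr : 0 ≤ r)
    (h₁ : IsSystemSolOn O A b Cm f r u x y) {x₂ : ℝ → Fin n → ℝ} {y₂ : ℝ → Fin k → ℝ}
    (h₂ : IsSystemSol n k m O A b Cm f (fun s => u (r + s)) x₂ y₂)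
    (hx : ∀ s, 0 ≤ s → x (r + s) = x₂ s) (hy : ∀ s, 0 ≤ s → y (r + s) = y₂ s) :
    IsSystemSol n k m O A b Cm f u x y := by
  obtain ⟨hx₂c, hy₂c, hmem₂, hxe₂, hye₂⟩ := h₂
  have hsub : MapsTo (fun t => t - r) (Ici r) (Ici 0) := fun _ ht => sub_nonneg.2 (mem_Ici.1 ht)
  have hback {t : ℝ} (ht : r ≤ t) : r + (t - r) = t := add_sub_cancel r t
  have hxc : ContinuousOn x (Ici 0) := by
    rw [← Icc_union_Ici_eq_Ici hr]
    refine h₁.continuousOn_x.union_of_isClosed ((hx₂c.comp (continuous_sub_right r).continuousOn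
      hsub).congr fun t ht => ?_) isClosed_Icc isClosed_Ici
    rw [Function.comp_apply, ← hx _ (hsub ht), hback (mem_Ici.1 ht)]
  have hyc : ContinuousOn y (Ici 0) := by
    rw [← Icc_union_Ici_eq_Ici hr]
    refine h₁.continuousOn_y.union_of_isClosed ((hy₂c.comp (continuous_sub_right r).continuousOn
      hsub).congr fun t ht => ?_) isClosed_Icc isClosed_Ici
    rw [Function.comp_apply, ← hy _ (hsub ht), hback (mem_Ici.1 ht)]
  have hmem : ∀ t, 0 ≤ t → (x t, y t) ∈ O := by
    intro t ht
    rcases le_total t r with htr | hrt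
    · exact h₁.mem t ⟨ht, htr⟩
    · simpa only [← hx _ (hsub hrt), ← hy _ (hsub hrt), hback hrt] using hmem₂ (t - r) (hsub hrt)
  have hint (t : ℝ) (ht : 0 ≤ t) := hc.integrableOn_integrands hU (hu.admOn t)
    (hxc.mono Icc_subset_Ici_self) (hyc.mono Icc_subset_Ici_self) fun s hs => hOΩ (hmem s hs.1)
  have hs0 {s t : ℝ} (ht : 0 ≤ t) (hs : s ∈ uIcc 0 t) : 0 ≤ s := by
    rw [uIcc_of_le ht] at hs; exact hs.1
  refine ⟨hxc, hyc, hmem, fun t ht => integral_eq_of_shift hr h₁.x_eq (fun t ht => ?_)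
    (fun t ht => (hint t ht).1.intervalIntegrable_of_mem ⟨le_rfl, ht⟩ ⟨ht, le_rfl⟩) ht,
    fun t ht => integral_eq_of_shift hr h₁.y_eq (fun t ht => ?_)
    (fun t ht => (hint t ht).2.intervalIntegrable_of_mem ⟨le_rfl, ht⟩ ⟨ht, le_rfl⟩) ht⟩
  · rw [hx t ht, hxe₂ t ht, ← hx 0 le_rfl, add_zero]
    exact congrArg _ (integral_congr fun s hs => by rw [hx s (hs0 ht hs), hy s (hs0 ht hs)])
  · rw [hy t ht, hye₂ t ht, ← hy 0 le_rfl, add_zero]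
    exact congrArg _ (integral_congr fun s hs => by rw [hx s (hs0 ht hs), hy s (hs0 ht hs)])

theorem IsTransition.isTransitionOn (hΦ : IsTransition n k m A y u Φ)
    (hA : IsEssBoundedMatrix (fun s => A (y s) (u s)) (volume.restrict (Icc 0 T))) :
    IsTransitionOn (fun s => A (y s) (u s)) Φ T := by
  obtain ⟨-, hΦc, hΦu, hΦe⟩ := hΦ
  have hΦc' : Continuous Φ := continuous_matrix hΦc
  refine ⟨hA, hΦc', fun t _ => hΦu t, fun t ht c => ?_⟩
  have hcol (j : Fin n) : IntervalIntegrable (fun s => A (y s) (u s) *ᵥ fun l => Φ s l j)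
      volume 0 t :=
    IntegrableOn.intervalIntegrable_of_mem
      (hA.integrable_mulVec (continuous_pi fun l => hΦc l j).integrableOn_Icc)
      ⟨le_rfl, ht.1.trans ht.2⟩ ht
  have hΦt : Φ t = 1 + Matrix.of fun i j => ∫ s in 0..t, (A (y s) (u s) * Φ s) i j :=
    Matrix.ext fun i j => hΦe t i j
  rw [hΦt, add_mulVec, one_mulVec,
    of_intervalIntegral_mulVec (M := fun s => A (y s) (u s) * Φ s) fun i j =>
      intervalIntegrable_pi_iff.1 (hcol j) i]
  exact congrArg _ (integral_congr fun s _ => (mulVec_mulVec _ _ _).symm)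

theorem IsSystemSolOn.pvec_eq (hc : ContinuousCoeffs Ω U A b Cm f) (hU : IsClosed U)
    (hOΩ : MapsTo Prod.snd O Ω) (hu : AdmOn m T U u) (h : IsSystemSolOn O A b Cm f T u x y)
    (hΦ : IsTransitionOn (fun s => A (y s) (u s)) Φ T) {t : ℝ} (ht : t ∈ Icc 0 T) :
    pvec n k m b Cm f y u Φ t = ∫ s in 0..t, Cm (y s) *ᵥ (Φ s *ᵥ x 0) := by
  have hyΩ : MapsTo y (Icc 0 T) Ω := fun s hs => hOΩ (h.mem s hs)
  have h0 : (0:ℝ) ∈ Icc 0 T := ⟨le_rfl, ht.1.trans ht.2⟩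
  have hsub : uIcc 0 t ⊆ Icc 0 T := uIcc_subset_Icc h0 ht
  have hC := hc.continuousOn_Cm_comp h.continuousOn_y hyΩ
  have hCx : IntervalIntegrable (fun s => Cm (y s) *ᵥ x s) volume 0 t :=
    (hC.matrix_mulVec h.continuousOn_x).integrableOn_Icc.intervalIntegrable_of_mem h0 ht
  have hCΦ : IntervalIntegrable (fun s => Cm (y s) *ᵥ (Φ s *ᵥ x 0)) volume 0 t :=
    (hC.matrix_mulVec (hΦ.continuous.matrix_mulVec continuous_const).continuousOn
      ).integrableOn_Icc.intervalIntegrable_of_mem h0 ht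
  have hθ : ∀ s ∈ Icc 0 T, thetaVec n k m b y u Φ s = x s - Φ s *ᵥ x 0 := fun s hs => by
    rw [hΦ.eq_mulVec_add_mulVec_integral (hu.integrableOn_comp hU hc.continuousOn_b
      h.continuousOn_y hyΩ) h.continuousOn_x h.x_eq hs, add_sub_cancel_left, thetaVec]
  have hy : y t - y 0 - ∫ s in 0..t, f (y s) (u s) = ∫ s in 0..t, Cm (y s) *ᵥ x s := by
    rw [h.y_eq t ht, integral_add ((hu.integrableOn_comp hU hc.continuousOn_f h.continuousOn_y
      hyΩ).intervalIntegrable_of_mem h0 ht) hCx]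
    abel
  have hCθ : ∫ s in 0..t, Cm (y s) *ᵥ thetaVec n k m b y u Φ s =
      (∫ s in 0..t, Cm (y s) *ᵥ x s) - ∫ s in 0..t, Cm (y s) *ᵥ (Φ s *ᵥ x 0) := by
    rw [← integral_sub hCx hCΦ]
    exact integral_congr fun s hs => by rw [hθ s (hsub hs), mulVec_sub]
  rw [pvec, hy, hCθ, sub_sub_cancel]

theorem IsSystemSolOn.add_smul_transition (hc : ContinuousCoeffs Ω U A b Cm f) (hU : IsClosed U)
    (hOΩ : MapsTo Prod.snd O Ω) (hu : AdmOn m T U u) (h : IsSystemSolOn O A b Cm f T u x y)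
    (hΦ : IsTransitionOn (fun s => A (y s) (u s)) Φ T) {v : Fin n → ℝ}
    (hv : ∀ t ∈ Icc 0 T, ∫ s in 0..t, Cm (y s) *ᵥ (Φ s *ᵥ v) = 0) {ε : ℝ}
    (hmem : ∀ t ∈ Icc 0 T, (x t + ε • (Φ t *ᵥ v), y t) ∈ O) :
    IsSystemSolOn O A b Cm f T u (fun t => x t + ε • (Φ t *ᵥ v)) y := by
  have hyΩ : MapsTo y (Icc 0 T) Ω := fun t ht => hOΩ (h.mem t ht)
  have hΦv : ContinuousOn (fun t => Φ t *ᵥ v) (Icc 0 T) :=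
    (hΦ.continuous.matrix_mulVec continuous_const).continuousOn
  obtain ⟨hFx, hFy⟩ := hc.integrableOn_integrands hU hu h.continuousOn_x h.continuousOn_y hyΩ
  have hAΦv : IntegrableOn (fun s => A (y s) (u s) *ᵥ (Φ s *ᵥ v)) (Icc 0 T) :=
    hΦ.essBounded.integrable_mulVec hΦv.integrableOn_Icc
  have hCΦv : IntegrableOn (fun s => Cm (y s) *ᵥ (Φ s *ᵥ v)) (Icc 0 T) :=
    ((hc.continuousOn_Cm_comp h.continuousOn_y hyΩ).matrix_mulVec hΦv).integrableOn_Icc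
  refine ⟨h.continuousOn_x.add (hΦv.const_smul ε), h.continuousOn_y, hmem, fun t ht => ?_,
    fun t ht => ?_⟩
  all_goals have h0 : (0:ℝ) ∈ Icc 0 T := ⟨le_rfl, ht.1.trans ht.2⟩
  · have e : ∫ s in 0..t, (A (y s) (u s) *ᵥ (x s + ε • (Φ s *ᵥ v)) + b (y s) (u s)) =
        (∫ s in 0..t, (A (y s) (u s) *ᵥ x s + b (y s) (u s))) +
          ε • ∫ s in 0..t, A (y s) (u s) *ᵥ (Φ s *ᵥ v) := by
      have hi : IntervalIntegrable (fun s => ε • (A (y s) (u s) *ᵥ (Φ s *ᵥ v))) volume 0 t :=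
        (hAΦv.intervalIntegrable_of_mem h0 ht).smul ε
      rw [← intervalIntegral.integral_smul, ← integral_add (hFx.intervalIntegrable_of_mem h0 ht) hi]
      exact integral_congr fun s _ => by simp only [mulVec_add, mulVec_smul]; abel
    show x t + ε • (Φ t *ᵥ v) = x 0 + ε • (Φ 0 *ᵥ v) +
      ∫ s in 0..t, (A (y s) (u s) *ᵥ (x s + ε • (Φ s *ᵥ v)) + b (y s) (u s))
    rw [e, hΦ.apply_zero_mulVec (ht.1.trans ht.2), hΦ.mulVec_eq t ht, smul_add]
    nth_rewrite 1 [h.x_eq t ht]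
    abel
  · have e : ∫ s in 0..t, (f (y s) (u s) + Cm (y s) *ᵥ (x s + ε • (Φ s *ᵥ v))) =
        (∫ s in 0..t, (f (y s) (u s) + Cm (y s) *ᵥ x s)) +
          ε • ∫ s in 0..t, Cm (y s) *ᵥ (Φ s *ᵥ v) := by
      have hi : IntervalIntegrable (fun s => ε • (Cm (y s) *ᵥ (Φ s *ᵥ v))) volume 0 t :=
        (hCΦv.intervalIntegrable_of_mem h0 ht).smul ε
      rw [← intervalIntegral.integral_smul, ← integral_add (hFy.intervalIntegrable_of_mem h0 ht) hi]
      exact integral_congr fun s _ => by simp only [mulVec_add, mulVec_smul]; abel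
    show y t = y 0 + ∫ s in 0..t, (f (y s) (u s) + Cm (y s) *ᵥ (x s + ε • (Φ s *ᵥ v)))
    rw [e, hv t ht, smul_zero, add_zero]
    exact h.y_eq t ht

theorem IsSystemSol.eq_zero_of_forall_integral_mulVec_eq_zero (hO : IsOpen O)
    (hc : ContinuousCoeffs Ω U A b Cm f) (hU : IsClosed U) (hOΩ : MapsTo Prod.snd O Ω)
    (hsolvable : ∀ p ∈ O, ∀ w, AdmLoc m U w →
      ∃ x' y', IsSystemSol n k m O A b Cm f w x' y' ∧ x' 0 = p.1 ∧ y' 0 = p.2)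
    (hu : AdmLoc m U u) (h : IsSystemSol n k m O A b Cm f u x y)
    (hdist : ∀ x' y', IsSystemSol n k m O A b Cm f u x' y' → y' 0 = y 0 → x' 0 ≠ x 0 →
      ∃ t ∈ Icc 0 r, y' t ≠ y t)
    (hr : 0 ≤ r) (hΦ : IsTransitionOn (fun s => A (y s) (u s)) Φ r) {v : Fin n → ℝ}
    (hv : ∀ t ∈ Icc 0 r, ∫ s in 0..t, Cm (y s) *ᵥ (Φ s *ᵥ v) = 0) : v = 0 := by
  by_contra hv0
  have hr' := h.isSystemSolOn r
  obtain ⟨ε, hε, hεO⟩ := hO.exists_pos_forall_add_smul_mem isCompact_Icc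
    (hr'.continuousOn_x.prodMk hr'.continuousOn_y) hr'.mem
    (w := fun t => (Φ t *ᵥ v, (0 : Fin k → ℝ)))
    ((hΦ.continuous.matrix_mulVec continuous_const).continuousOn.prodMk continuousOn_const)
  have hmem : ∀ t ∈ Icc 0 r, (x t + ε • (Φ t *ᵥ v), y t) ∈ O := fun t ht => by
    simpa using hεO t ht
  set x₁ : ℝ → Fin n → ℝ := fun t => x t + ε • (Φ t *ᵥ v)
  have h₁ := hr'.add_smul_transition hc hU hOΩ (hu.admOn r) hΦ hv hmem
  obtain ⟨x₂, y₂, h₂, hx₂, hy₂⟩ := hsolvable (x₁ r, y r) (hmem r ⟨hr, le_rfl⟩) _ (hu.shift hr)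
  have hsol : IsSystemSol n k m O A b Cm f u (concatAt r x₁ x₂) (concatAt r y y₂) :=
    (h₁.congr (fun _ ht => concatAt_of_le ht.2) fun _ ht => concatAt_of_le ht.2
      ).isSystemSol_of_shift hc hU hOΩ hu hr h₂ (fun _ hs => concatAt_add hx₂ hs)
        fun _ hs => concatAt_add hy₂ hs
  obtain ⟨t, ht, hne⟩ := hdist _ _ hsol (concatAt_of_le hr) (by
    rw [concatAt_of_le hr]
    simpa [x₁, hΦ.apply_zero_mulVec hr, hε.ne'] using hv0)
  exact hne (concatAt_of_le ht.2)

end System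

section Gramian

variable {n k : ℕ} {Cm : (Fin k → ℝ) → Matrix (Fin k) (Fin n) ℝ} {y : ℝ → Fin k → ℝ}
  {Φ : ℝ → Matrix (Fin n) (Fin n) ℝ} {T : ℝ}

theorem qmat_transpose (t : ℝ) :
    (qmat n k Cm y Φ t)ᵀ = Matrix.of fun i j => ∫ s in 0..t, (Cm (y s) * Φ s) i j := by
  ext i j
  simp only [qmat, transpose_apply, of_apply, ← transpose_mul]

theorem continuousOn_qmat (hC : ContinuousOn (fun s => Cm (y s)) (Icc 0 T))
    (hΦ : ContinuousOn Φ (Icc 0 T)) : ContinuousOn (qmat n k Cm y Φ) (Icc 0 T) := by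
  have hR : ContinuousOn (fun s => (Φ s)ᵀ * (Cm (y s))ᵀ) (Icc 0 T) :=
    (continuous_fst.matrix_transpose.matrix_mul continuous_snd.matrix_transpose).comp_continuousOn
      (hΦ.prodMk hC)
  exact continuousOn_pi.2 fun i => continuousOn_pi.2 fun j =>
    (hR.matrix_elem i j).integrableOn_Icc.continuousOn_primitive_Icc

theorem qmat_transpose_mulVec (hC : ContinuousOn (fun s => Cm (y s)) (Icc 0 T))
    (hΦ : ContinuousOn Φ (Icc 0 T)) {t : ℝ} (ht : t ∈ Icc 0 T) (v : Fin n → ℝ) :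
    (qmat n k Cm y Φ t)ᵀ *ᵥ v = ∫ s in 0..t, Cm (y s) *ᵥ (Φ s *ᵥ v) := by
  have hR : ContinuousOn (fun s => Cm (y s) * Φ s) (Icc 0 T) :=
    (continuous_fst.matrix_mul continuous_snd).comp_continuousOn (hC.prodMk hΦ)
  rw [qmat_transpose, of_intervalIntegral_mulVec fun i j =>
    (hR.matrix_elem i j).integrableOn_Icc.intervalIntegrable_of_mem ⟨le_rfl, ht.1.trans ht.2⟩ ht]
  exact integral_congr fun s _ => (mulVec_mulVec _ _ _).symm

theorem Qmat_mulVec (hC : ContinuousOn (fun s => Cm (y s)) (Icc 0 T))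
    (hΦ : ContinuousOn Φ (Icc 0 T)) (hT : 0 ≤ T) (v : Fin n → ℝ) :
    Qmat n k T Cm y Φ *ᵥ v = ∫ t in 0..T, qmat n k Cm y Φ t *ᵥ ((qmat n k Cm y Φ t)ᵀ *ᵥ v) := by
  have hq := continuousOn_qmat hC hΦ
  have hS : ContinuousOn (fun t => qmat n k Cm y Φ t * (qmat n k Cm y Φ t)ᵀ) (Icc 0 T) :=
    (continuous_fst.matrix_mul continuous_snd.matrix_transpose).comp_continuousOn (hq.prodMk hq)
  rw [Qmat, of_intervalIntegral_mulVec fun i j =>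
    (hS.matrix_elem i j).integrableOn_Icc.intervalIntegrable_of_mem ⟨le_rfl, hT⟩ ⟨hT, le_rfl⟩]
  exact integral_congr fun t _ => (mulVec_mulVec _ _ _).symm

theorem Qmat_isHermitian : (Qmat n k T Cm y Φ).IsHermitian := by
  ext i j
  simp only [conjTranspose_apply, star_trivial, Qmat, of_apply]
  exact integral_congr fun t _ => by
    rw [← transpose_apply (qmat n k Cm y Φ t * _), transpose_mul, transpose_transpose]

theorem dotProduct_Qmat_mulVec (hC : ContinuousOn (fun s => Cm (y s)) (Icc 0 T))
    (hΦ : ContinuousOn Φ (Icc 0 T)) (hT : 0 ≤ T) (v : Fin n → ℝ) :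
    v ⬝ᵥ (Qmat n k T Cm y Φ *ᵥ v) =
      ∫ t in 0..T, ((qmat n k Cm y Φ t)ᵀ *ᵥ v) ⬝ᵥ ((qmat n k Cm y Φ t)ᵀ *ᵥ v) := by
  have hq := continuousOn_qmat hC hΦ
  rw [Qmat_mulVec hC hΦ hT, dotProduct_intervalIntegral _
    ((hq.matrix_mulVec (hq.matrix_transpose.matrix_mulVec continuousOn_const)).integrableOn_Icc
      |>.intervalIntegrable_of_mem ⟨le_rfl, hT⟩ ⟨hT, le_rfl⟩)]
  exact integral_congr fun t _ => by rw [dotProduct_mulVec, ← mulVec_transpose]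

theorem Qmat_posDef (hC : ContinuousOn (fun s => Cm (y s)) (Icc 0 T))
    (hΦ : ContinuousOn Φ (Icc 0 T)) (hT : 0 < T)
    (hker : ∀ v, (∀ t ∈ Icc 0 T, (qmat n k Cm y Φ t)ᵀ *ᵥ v = 0) → v = 0) :
    (Qmat n k T Cm y Φ).PosDef := by
  refine PosDef.of_dotProduct_mulVec_pos Qmat_isHermitian fun v hv => ?_
  obtain ⟨t, ht, hne⟩ : ∃ t ∈ Icc 0 T, (qmat n k Cm y Φ t)ᵀ *ᵥ v ≠ 0 := by
    by_contra! h
    exact hv (hker v h)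
  have hq := continuousOn_qmat hC hΦ
  rw [star_trivial, dotProduct_Qmat_mulVec hC hΦ hT.le]
  refine integral_pos hT ?_ (fun s _ => ?_) ⟨t, ht, ?_⟩
  · have hw := hq.matrix_transpose.matrix_mulVec (continuousOn_const (c := v))
    exact (continuous_fst.dotProduct continuous_snd).comp_continuousOn (hw.prodMk hw)
  · simpa using dotProduct_star_self_nonneg ((qmat n k Cm y Φ s)ᵀ *ᵥ v)
  · simpa using dotProduct_self_star_pos_iff.2 hne

end Gramian

theorem StronglyDist.exists_ne_of_isSystemSol {n k m : ℕ} {O : Set ((Fin n → ℝ) × (Fin k → ℝ))}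
    {U : Set (Fin m → ℝ)} {A : (Fin k → ℝ) → (Fin m → ℝ) → Matrix (Fin n) (Fin n) ℝ}
    {b : (Fin k → ℝ) → (Fin m → ℝ) → (Fin n → ℝ)} {Cm : (Fin k → ℝ) → Matrix (Fin k) (Fin n) ℝ}
    {f : (Fin k → ℝ) → (Fin m → ℝ) → (Fin k → ℝ)}
    {X : (Fin n → ℝ) → (Fin k → ℝ) → (ℝ → (Fin m → ℝ)) → ℝ → (Fin n → ℝ)}
    {Y : (Fin n → ℝ) → (Fin k → ℝ) → (ℝ → (Fin m → ℝ)) → ℝ → (Fin k → ℝ)} {r : ℝ}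
    {u : ℝ → Fin m → ℝ} {x₀ : Fin n → ℝ} {y₀ : Fin k → ℝ}
    (hdist : StronglyDist n k m O Y r u x₀ y₀)
    (hUniq : ∀ x₀ y₀, (x₀, y₀) ∈ O → ∀ u, AdmLoc m U u → ∀ x y,
      IsSystemSol n k m O A b Cm f u x y → x 0 = x₀ → y 0 = y₀ →
        ∀ t, 0 ≤ t → x t = X x₀ y₀ u t ∧ y t = Y x₀ y₀ u t)
    (hu : AdmLoc m U u) {x' : ℝ → Fin n → ℝ} {y' : ℝ → Fin k → ℝ}
    (h : IsSystemSol n k m O A b Cm f u x' y') (hy' : y' 0 = y₀) (hx' : x' 0 ≠ x₀) :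
    ∃ t ∈ Icc 0 r, y' t ≠ Y x₀ y₀ u t := by
  have hmem : (x' 0, y₀) ∈ O := hy' ▸ h.2.2.1 0 le_rfl
  obtain ⟨t, ht, hpos⟩ := hdist (x' 0) hmem hx'
  refine ⟨t, ht, fun he => hpos.ne' ?_⟩
  rw [← (hUniq (x' 0) y₀ hmem u hu x' y' h rfl hy' t ht.1).2, he, sub_self, norm_zero]

theorem initial_state_reconstruction_formula_general
    (n k m : ℕ) (O : Set ((Fin n → ℝ) × (Fin k → ℝ))) (hO : IsOpen O)
    (U : Set (Fin m → ℝ)) (hUcl : IsClosed U)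
    (A : (Fin k → ℝ) → (Fin m → ℝ) → Matrix (Fin n) (Fin n) ℝ)
    (b : (Fin k → ℝ) → (Fin m → ℝ) → (Fin n → ℝ))
    (Cm : (Fin k → ℝ) → Matrix (Fin k) (Fin n) ℝ)
    (f : (Fin k → ℝ) → (Fin m → ℝ) → (Fin k → ℝ))
    (hA : ∀ i j, LocLipOn (({y : Fin k → ℝ | ∃ x : Fin n → ℝ, (x, y) ∈ O}) ×ˢ U)
      (fun p => A p.1 p.2 i j))
    (hb : LocLipOn (({y : Fin k → ℝ | ∃ x : Fin n → ℝ, (x, y) ∈ O}) ×ˢ U)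
      (fun p => b p.1 p.2))
    (hCm : ∀ i j, LocLipOn {y : Fin k → ℝ | ∃ x : Fin n → ℝ, (x, y) ∈ O} (fun y => Cm y i j))
    (hf : LocLipOn (({y : Fin k → ℝ | ∃ x : Fin n → ℝ, (x, y) ∈ O}) ×ˢ U)
      (fun p => f p.1 p.2))
    (X : (Fin n → ℝ) → (Fin k → ℝ) → (ℝ → (Fin m → ℝ)) → ℝ → (Fin n → ℝ))
    (Y : (Fin n → ℝ) → (Fin k → ℝ) → (ℝ → (Fin m → ℝ)) → ℝ → (Fin k → ℝ))
    (hXY : ∀ x₀ y₀, (x₀, y₀) ∈ O → ∀ u, AdmLoc m U u →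
      IsSystemSol n k m O A b Cm f u (X x₀ y₀ u) (Y x₀ y₀ u) ∧
        X x₀ y₀ u 0 = x₀ ∧ Y x₀ y₀ u 0 = y₀)
    (hUniq : ∀ x₀ y₀, (x₀, y₀) ∈ O → ∀ u, AdmLoc m U u → ∀ x y,
      IsSystemSol n k m O A b Cm f u x y → x 0 = x₀ → y 0 = y₀ →
        ∀ t, 0 ≤ t → x t = X x₀ y₀ u t ∧ y t = Y x₀ y₀ u t)
    (r : ℝ) (hr : 0 < r)
    (x₀ : Fin n → ℝ) (y₀ : Fin k → ℝ) (hxy₀ : (x₀, y₀) ∈ O)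
    (u : ℝ → (Fin m → ℝ)) (hu : AdmLoc m U u)
    (Φ : ℝ → Matrix (Fin n) (Fin n) ℝ)
    (hΦ : IsTransition n k m A (Y x₀ y₀ u) u Φ)
    (hdist : StronglyDist n k m O Y r u x₀ y₀) :
    (Qmat n k r Cm (Y x₀ y₀ u) Φ).PosDef ∧
      x₀ = (Qmat n k r Cm (Y x₀ y₀ u) Φ)⁻¹ *ᵥ
        ∫ t in (0:ℝ)..r,
          qmat n k Cm (Y x₀ y₀ u) Φ t *ᵥ pvec n k m b Cm f (Y x₀ y₀ u) u Φ t := by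
  obtain ⟨hsol, hx0, hy0⟩ := hXY x₀ y₀ hxy₀ u hu
  have hc : ContinuousCoeffs {y | ∃ x : Fin n → ℝ, (x, y) ∈ O} U A b Cm f :=
    ⟨fun i j => (hA i j).continuousOn, hb.continuousOn, fun i j => (hCm i j).continuousOn,
      hf.continuousOn⟩
  have hOΩ : MapsTo Prod.snd O {y | ∃ x : Fin n → ℝ, (x, y) ∈ O} := fun p hp => ⟨p.1, hp⟩
  have hsolr := hsol.isSystemSolOn r
  have hyΩ : MapsTo (Y x₀ y₀ u) (Icc 0 r) _ := fun t ht => hOΩ (hsolr.mem t ht)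
  have hΦr := hΦ.isTransitionOn ((hu.admOn r).isEssBoundedMatrix_comp hUcl hc.continuousOn_A
    hsolr.continuousOn_y hyΩ)
  have hC := hc.continuousOn_Cm_comp hsolr.continuousOn_y hyΩ
  have hΦc : ContinuousOn Φ (Icc 0 r) := hΦr.continuous.continuousOn
  have hQ : (Qmat n k r Cm (Y x₀ y₀ u) Φ).PosDef := Qmat_posDef hC hΦc hr fun v hv =>
    hsol.eq_zero_of_forall_integral_mulVec_eq_zero hO hc hUcl hOΩ
      (fun p hp w hw => ⟨_, _, hXY p.1 p.2 hp w hw⟩) hu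
      (fun x' y' h' hy' hx' => hdist.exists_ne_of_isSystemSol hUniq hu h' (hy'.trans hy0)
        (hx0 ▸ hx')) hr.le hΦr
      fun t ht => (qmat_transpose_mulVec hC hΦc ht v).symm.trans (hv t ht)
  have hqp : ∫ t in (0:ℝ)..r, qmat n k Cm (Y x₀ y₀ u) Φ t *ᵥ pvec n k m b Cm f (Y x₀ y₀ u) u Φ t =
      Qmat n k r Cm (Y x₀ y₀ u) Φ *ᵥ x₀ := by
    rw [Qmat_mulVec hC hΦc hr.le]
    refine integral_congr fun t ht => ?_
    rw [uIcc_of_le hr.le] at ht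
    rw [hsolr.pvec_eq hc hUcl hOΩ (hu.admOn r) hΦr ht, hx0, qmat_transpose_mulVec hC hΦc ht]
  refine ⟨hQ, ?_⟩
  rw [hqp, mulVec_mulVec, nonsing_inv_mul _ ((isUnit_iff_isUnit_det _).1 hQ.isUnit), one_mulVec]

/-- Proposition 2.3, formula (2.12): if `u` strongly distinguishes
`(x₀,y₀)` in time `r > 0`, then `Q` is positive definite and
`x₀ = Q⁻¹(r,x₀,y₀;u) ∫₀ʳ q(t) p(t) dt`. -/
theorem initial_state_reconstruction_formula
    (n k m : ℕ) (O : Set ((Fin n → ℝ) × (Fin k → ℝ))) (hO : IsOpen O)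
    (U : Set (Fin m → ℝ)) (hUne : U.Nonempty) (hUcl : IsClosed U)
    (A : (Fin k → ℝ) → (Fin m → ℝ) → Matrix (Fin n) (Fin n) ℝ)
    (b : (Fin k → ℝ) → (Fin m → ℝ) → (Fin n → ℝ))
    (Cm : (Fin k → ℝ) → Matrix (Fin k) (Fin n) ℝ)
    (f : (Fin k → ℝ) → (Fin m → ℝ) → (Fin k → ℝ))
    (hA : ∀ i j, LocLipOn (({y : Fin k → ℝ | ∃ x : Fin n → ℝ, (x, y) ∈ O}) ×ˢ U)
      (fun p => A p.1 p.2 i j))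
    (hb : LocLipOn (({y : Fin k → ℝ | ∃ x : Fin n → ℝ, (x, y) ∈ O}) ×ˢ U)
      (fun p => b p.1 p.2))
    (hCm : ∀ i j, LocLipOn {y : Fin k → ℝ | ∃ x : Fin n → ℝ, (x, y) ∈ O} (fun y => Cm y i j))
    (hf : LocLipOn (({y : Fin k → ℝ | ∃ x : Fin n → ℝ, (x, y) ∈ O}) ×ˢ U)
      (fun p => f p.1 p.2))
    (X : (Fin n → ℝ) → (Fin k → ℝ) → (ℝ → (Fin m → ℝ)) → ℝ → (Fin n → ℝ))
    (Y : (Fin n → ℝ) → (Fin k → ℝ) → (ℝ → (Fin m → ℝ)) → ℝ → (Fin k → ℝ))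
    (hXY : ∀ x₀ y₀, (x₀, y₀) ∈ O → ∀ u, AdmLoc m U u →
      IsSystemSol n k m O A b Cm f u (X x₀ y₀ u) (Y x₀ y₀ u) ∧
        X x₀ y₀ u 0 = x₀ ∧ Y x₀ y₀ u 0 = y₀)
    (hUniq : ∀ x₀ y₀, (x₀, y₀) ∈ O → ∀ u, AdmLoc m U u → ∀ x y,
      IsSystemSol n k m O A b Cm f u x y → x 0 = x₀ → y 0 = y₀ →
        ∀ t, 0 ≤ t → x t = X x₀ y₀ u t ∧ y t = Y x₀ y₀ u t)
    (r : ℝ) (hr : 0 < r)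
    (x₀ : Fin n → ℝ) (y₀ : Fin k → ℝ) (hxy₀ : (x₀, y₀) ∈ O)
    (u : ℝ → (Fin m → ℝ)) (hu : AdmLoc m U u) (huU : ∀ t ∈ Icc (0:ℝ) r, u t ∈ U)
    (Φ : ℝ → Matrix (Fin n) (Fin n) ℝ)
    (hΦ : IsTransition n k m A (Y x₀ y₀ u) u Φ)
    (hdist : StronglyDist n k m O Y r u x₀ y₀) :
    (Qmat n k r Cm (Y x₀ y₀ u) Φ).PosDef ∧
      x₀ = (Qmat n k r Cm (Y x₀ y₀ u) Φ)⁻¹ *ᵥ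
        ∫ t in (0:ℝ)..r,
          qmat n k Cm (Y x₀ y₀ u) Φ t *ᵥ pvec n k m b Cm f (Y x₀ y₀ u) u Φ t :=
  initial_state_reconstruction_formula_general n k m O hO U hUcl A b Cm f hA hb hCm hf X Y hXY hUniq
    r hr x₀ y₀ hxy₀ u hu Φ hΦ hdist
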